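/- arXiv:1908.01055 — 6 statements merged into one kernel-verified Lean document; each statement's English description precedes it below -/
import Mathlib

section
/- Let Q be a unital quantale and let a ∈ Q be strongly square increasing with a ≤ ε. Then a is central, i.e., a·b = b·a for all b ∈ Q. -/
/-- in a unital quantale, a strongly square increasing element
below the unit is central. -/
theorem ssi_le_one_central {Q : Type*} [CompleteLattice Q] [Monoid Q]
    (hdl : ∀ (x : Q) (s : Set Q), x * sSup s = ⨆ y ∈ s, x * y)
    (hdr : ∀ (x : Q) (s : Set Q), sSup s * x = ⨆ y ∈ s, y * x)
    (a : Q)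
    (hssi : ∀ b : Q, a * b ≤ a * b * a ∧ b * a ≤ a * b * a)
    (ha : a ≤ 1) :
    ∀ b : Q, a * b = b * a := by
  have hml : ∀ x y z : Q, y ≤ z → x * y ≤ x * z := by
    intro x y z h
    have hs : sSup ({y, z} : Set Q) = z := by
      rw [sSup_pair, sup_eq_right.mpr h]
    have := hdl x {y, z}
    rw [hs] at this
    rw [this]
    exact le_biSup (fun w => x * w) (Set.mem_insert _ _)
  have hmr : ∀ x y z : Q, y ≤ z → y * x ≤ z * x := by
    intro x y z h
    have hs : sSup ({y, z} : Set Q) = z := by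
      rw [sSup_pair, sup_eq_right.mpr h]
    have := hdr x {y, z}
    rw [hs] at this
    rw [this]
    exact le_biSup (fun w => w * x) (Set.mem_insert _ _)
  intro b
  apply le_antisymm
  · calc a * b ≤ a * b * a := (hssi b).1
    _ ≤ 1 * b * a := hmr a _ _ (hmr b a 1 ha)
    _ = b * a := by rw [one_mul]
  · calc b * a ≤ a * b * a := (hssi b).2
    _ ≤ a * b * 1 := hml (a*b) a 1 ha
    _ = a * b := by rw [mul_one]
end

section
/- Let Q be a quantale and let a₁, a₂ ∈ Q be strongly square increasing elements. Then the product a₁·a₂ is strongly square increasing, i.e., for all b ∈ Q, (a₁·a₂)·b ≤ (a₁·a₂)·b·(a₁·a₂) and b·(a₁·a₂) ≤ (a₁·a₂)·b·(a₁·a₂). -/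
/-- the product of two strongly square increasing elements is
strongly square increasing. -/
theorem ssi_mul {Q : Type*} [CompleteLattice Q] [Semigroup Q]
    (hdl : ∀ (x : Q) (s : Set Q), x * sSup s = ⨆ y ∈ s, x * y)
    (hdr : ∀ (x : Q) (s : Set Q), sSup s * x = ⨆ y ∈ s, y * x)
    (a₁ a₂ : Q)
    (h₁ : ∀ b : Q, a₁ * b ≤ a₁ * b * a₁ ∧ b * a₁ ≤ a₁ * b * a₁)
    (h₂ : ∀ b : Q, a₂ * b ≤ a₂ * b * a₂ ∧ b * a₂ ≤ a₂ * b * a₂) :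
    ∀ b : Q, a₁ * a₂ * b ≤ a₁ * a₂ * b * (a₁ * a₂) ∧
      b * (a₁ * a₂) ≤ a₁ * a₂ * b * (a₁ * a₂) := by
  have mono_l : ∀ z x y : Q, x ≤ y → z * x ≤ z * y := by
    intro z x y hxy
    have hs : sSup ({x, y} : Set Q) = y := by
      apply le_antisymm (sSup_le (by rintro w (rfl | rfl) <;> simp [hxy]))
      exact le_sSup (by simp)
    calc z * x ≤ ⨆ w ∈ ({x, y} : Set Q), z * w :=
          le_biSup _ (show x ∈ ({x, y} : Set Q) by simp)
      _ = z * sSup {x, y} := (hdl z _).symm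
      _ = z * y := by rw [hs]
  have mono_r : ∀ z x y : Q, x ≤ y → x * z ≤ y * z := by
    intro z x y hxy
    have hs : sSup ({x, y} : Set Q) = y := by
      apply le_antisymm (sSup_le (by rintro w (rfl | rfl) <;> simp [hxy]))
      exact le_sSup (by simp)
    calc x * z ≤ ⨆ w ∈ ({x, y} : Set Q), w * z :=
          le_biSup (fun w => w * z) (show x ∈ ({x, y} : Set Q) by simp)
      _ = sSup {x, y} * z := (hdr z _).symm
      _ = y * z := by rw [hs]
  intro b
  constructor
  · calc a₁ * a₂ * b = a₁ * (a₂ * b) := by rw [mul_assoc]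
      _ ≤ a₁ * (a₂ * b) * a₁ := (h₁ (a₂ * b)).1
      _ = a₁ * (a₂ * (b * a₁)) := by rw [mul_assoc, mul_assoc]
      _ ≤ a₁ * (a₂ * (b * a₁) * a₂) := mono_l _ _ _ (h₂ (b * a₁)).1
      _ = a₁ * a₂ * b * (a₁ * a₂) := by simp only [mul_assoc]
  · calc b * (a₁ * a₂) = (b * a₁) * a₂ := by rw [mul_assoc]
      _ ≤ a₂ * (b * a₁) * a₂ := (h₂ (b * a₁)).2
      _ = (a₂ * b) * a₁ * a₂ := by simp only [mul_assoc]
      _ ≤ a₁ * (a₂ * b) * a₁ * a₂ := mono_r _ _ _ (h₁ (a₂ * b)).2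
      _ = a₁ * a₂ * b * (a₁ * a₂) := by simp only [mul_assoc]
end

section
/- Let Q be a quantale. The set of strongly square increasing elements of Q is a subquantale of Q, i.e., it is closed under multiplication and under arbitrary suprema. -/
/-- the strongly square increasing elements form a subquantale. -/
theorem ssi_subquantale {Q : Type*} [CompleteLattice Q] [Semigroup Q]
    (hdl : ∀ (x : Q) (s : Set Q), x * sSup s = ⨆ y ∈ s, x * y)
    (hdr : ∀ (x : Q) (s : Set Q), sSup s * x = ⨆ y ∈ s, y * x) :
    (∀ a ∈ {a : Q | ∀ b : Q, a * b ≤ a * b * a ∧ b * a ≤ a * b * a},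
     ∀ c ∈ {a : Q | ∀ b : Q, a * b ≤ a * b * a ∧ b * a ≤ a * b * a},
      a * c ∈ {a : Q | ∀ b : Q, a * b ≤ a * b * a ∧ b * a ≤ a * b * a}) ∧
    (∀ T ⊆ {a : Q | ∀ b : Q, a * b ≤ a * b * a ∧ b * a ≤ a * b * a},
      sSup T ∈ {a : Q | ∀ b : Q, a * b ≤ a * b * a ∧ b * a ≤ a * b * a}) := by
  have hl : ∀ x a b : Q, a ≤ b → x * a ≤ x * b := by
    intro x a b hab
    have h := hdl x {a, b}
    rw [sSup_pair, sup_eq_right.mpr hab] at h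
    rw [h]
    exact le_iSup₂_of_le a (by simp) le_rfl
  have hr : ∀ x a b : Q, a ≤ b → a * x ≤ b * x := by
    intro x a b hab
    have h := hdr x {a, b}
    rw [sSup_pair, sup_eq_right.mpr hab] at h
    rw [h]
    exact le_iSup₂_of_le a (by simp) le_rfl
  constructor
  · rintro a ha c hc b
    constructor
    · calc a * c * b = a * (c * b) := by rw [mul_assoc]
        _ ≤ a * (c * b * c) := hl _ _ _ (hc b).1
        _ = a * (c * b) * c := by rw [mul_assoc, mul_assoc, mul_assoc]
        _ ≤ a * (c * b) * a * c := hr c _ _ (ha (c * b)).1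
        _ = a * c * b * (a * c) := by simp only [mul_assoc]
    · calc b * (a * c) = b * a * c := by rw [mul_assoc]
        _ ≤ c * (b * a) * c := (hc (b * a)).2
        _ = c * b * a * c := by simp only [mul_assoc]
        _ ≤ a * (c * b) * a * c := by
            have := (ha (c * b)).2
            exact hr c _ _ (by simpa [mul_assoc] using this)
        _ = a * c * b * (a * c) := by simp only [mul_assoc]
  · intro T hT b
    constructor
    · have h1 : sSup T * b = ⨆ a ∈ T, a * b := hdr b T
      nth_rewrite 1 [h1]
      apply iSup₂_le
      intro a haT
      calc a * b ≤ a * b * a := (hT haT b).1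
        _ ≤ sSup T * b * a := hr _ _ _ (hr b _ _ (le_sSup haT))
        _ ≤ sSup T * b * sSup T := hl _ _ _ (le_sSup haT)
    · have h1 : b * sSup T = ⨆ a ∈ T, b * a := hdl b T
      nth_rewrite 1 [h1]
      apply iSup₂_le
      intro a haT
      calc b * a ≤ a * b * a := (hT haT b).2
        _ ≤ sSup T * b * a := hr _ _ _ (hr b _ _ (le_sSup haT))
        _ ≤ sSup T * b * sSup T := hl _ _ _ (le_sSup haT)
end

section
/- Let Q be a quantale and let I₁, I₂ be quantic conuclei on Q with I₁ ≤ I₂ pointwise. If I₂ is central (I₂(a)·b = b·I₂(a) for all a, b ∈ Q), then I₁ is central, i.e., I₁(a)·b = b·I₁(a) for all a, b ∈ Q. -/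
/-- A quantic conucleus on a quantale. -/
def IsConucleus {Q : Type*} [CompleteLattice Q] [Mul Q] (I : Q → Q) : Prop :=
  (∀ a, I a ≤ a) ∧ (∀ a, I (I a) = I a) ∧ (∀ a b, a ≤ b → I a ≤ I b) ∧
  (∀ a b, I a * I b = I (I a * I b))

/-- centrality is inherited downwards in the pointwise order. -/
theorem central_downward {Q : Type*} [CompleteLattice Q] [Semigroup Q]
    (hdl : ∀ (x : Q) (s : Set Q), x * sSup s = ⨆ y ∈ s, x * y)
    (hdr : ∀ (x : Q) (s : Set Q), sSup s * x = ⨆ y ∈ s, y * x)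
    (I₁ I₂ : Q → Q) (hI₁ : IsConucleus I₁) (hI₂ : IsConucleus I₂)
    (hle : ∀ a, I₁ a ≤ I₂ a)
    (hcentral : ∀ a b : Q, I₂ a * b = b * I₂ a) :
    ∀ a b : Q, I₁ a * b = b * I₁ a := by
  intro a b
  have key : I₂ (I₁ a) = I₁ a :=
    le_antisymm (hI₂.1 _) ((hI₁.2.1 a).symm.trans_le (hle (I₁ a)))
  rw [← key, hcentral]
end

section
/- Let Q be a quantale and S ⊆ Q a subquantale. Then the map I : Q → Q defined by I(a) = ⋁{q ∈ S | q ≤ a and q is central} is a central quantic conucleus on Q, i.e., it is a quantic conucleus and I(a)·b = b·I(a) for all a, b ∈ Q. -/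
/-- the central-restricted induced operator is a central quantic
conucleus. -/
theorem central_conucleus {Q : Type*} [CompleteLattice Q] [Semigroup Q]
    (hdl : ∀ (x : Q) (s : Set Q), x * sSup s = ⨆ y ∈ s, x * y)
    (hdr : ∀ (x : Q) (s : Set Q), sSup s * x = ⨆ y ∈ s, y * x)
    (S : Set Q)
    (hSmul : ∀ a ∈ S, ∀ b ∈ S, a * b ∈ S)
    (hSsup : ∀ T ⊆ S, sSup T ∈ S) :
    IsConucleus (fun a : Q => sSup {q ∈ S | q ≤ a ∧ ∀ b : Q, q * b = b * q}) ∧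
    (∀ a b : Q,
      sSup {q ∈ S | q ≤ a ∧ ∀ c : Q, q * c = c * q} * b =
        b * sSup {q ∈ S | q ≤ a ∧ ∀ c : Q, q * c = c * q}) := by
  set T : Q → Set Q := fun a => {q ∈ S | q ≤ a ∧ ∀ b : Q, q * b = b * q} with hT
  set I : Q → Q := fun a => sSup (T a) with hI
  have hle : ∀ a, I a ≤ a := fun a => sSup_le (fun q hq => hq.2.1)
  have hmono : ∀ a b, a ≤ b → I a ≤ I b := by
    intro a b hab
    exact sSup_le_sSup (fun q hq => ⟨hq.1, hq.2.1.trans hab, hq.2.2⟩)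
  have hS : ∀ a, I a ∈ S := fun a => hSsup _ (fun q hq => hq.1)
  have hcen : ∀ a (b : Q), I a * b = b * I a := by
    intro a b
    rw [hI]
    simp only [hdr b (T a), hdl b (T a)]
    exact iSup_congr fun q => iSup_congr fun hq => hq.2.2 b
  have hmem : ∀ a, I a ∈ T (I a) := fun a => ⟨hS a, le_rfl, hcen a⟩
  have hidem : ∀ a, I (I a) = I a := by
    intro a
    exact le_antisymm (hle _) (le_sSup (hmem a))
  refine ⟨⟨hle, hidem, hmono, ?_⟩, hcen⟩
  intro a b
  refine le_antisymm (le_sSup ?_) (hle _)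
  refine ⟨hSmul _ (hS a) _ (hS b), le_rfl, fun c => ?_⟩
  rw [mul_assoc, hcen b, ← mul_assoc, hcen a, mul_assoc]
end

section
/- Let Q be a quantale and S ⊆ Q a subquantale. Then the map I : Q → Q defined by I(a) = ⋁{q ∈ S | q ≤ a and q is strongly square increasing} is a strongly square increasing quantic conucleus on Q, i.e., it is a quantic conucleus and for all a, b ∈ Q, I(a)·b ≤ I(a)·b·I(a) and b·I(a) ≤ I(a)·b·I(a). -/
/-- the operator induced by the strongly square increasing elements
of a subquantale is a strongly square increasing quantic conucleus. -/
theorem ssi_conucleus {Q : Type*} [CompleteLattice Q] [Semigroup Q]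
    (hdl : ∀ (x : Q) (s : Set Q), x * sSup s = ⨆ y ∈ s, x * y)
    (hdr : ∀ (x : Q) (s : Set Q), sSup s * x = ⨆ y ∈ s, y * x)
    (S : Set Q)
    (hSmul : ∀ a ∈ S, ∀ b ∈ S, a * b ∈ S)
    (hSsup : ∀ T ⊆ S, sSup T ∈ S) :
    IsConucleus
      (fun a : Q => sSup {q ∈ S | q ≤ a ∧ ∀ b : Q, q * b ≤ q * b * q ∧ b * q ≤ q * b * q}) ∧
    (∀ a b : Q,
      sSup {q ∈ S | q ≤ a ∧ ∀ c : Q, q * c ≤ q * c * q ∧ c * q ≤ q * c * q} * b ≤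
        sSup {q ∈ S | q ≤ a ∧ ∀ c : Q, q * c ≤ q * c * q ∧ c * q ≤ q * c * q} * b *
          sSup {q ∈ S | q ≤ a ∧ ∀ c : Q, q * c ≤ q * c * q ∧ c * q ≤ q * c * q} ∧
      b * sSup {q ∈ S | q ≤ a ∧ ∀ c : Q, q * c ≤ q * c * q ∧ c * q ≤ q * c * q} ≤
        sSup {q ∈ S | q ≤ a ∧ ∀ c : Q, q * c ≤ q * c * q ∧ c * q ≤ q * c * q} * b *
          sSup {q ∈ S | q ≤ a ∧ ∀ c : Q, q * c ≤ q * c * q ∧ c * q ≤ q * c * q}) := by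
  -- monotonicity of multiplication
  have hml : ∀ {x y : Q} (z : Q), x ≤ y → z * x ≤ z * y := by
    intro x y z h
    have hxy : sSup ({x, y} : Set Q) = y := by
      rw [sSup_insert, sSup_singleton]; exact sup_eq_right.mpr h
    calc z * x ≤ ⨆ a ∈ ({x, y} : Set Q), z * a := le_biSup (fun a => z * a) (Set.mem_insert x {y})
      _ = z * sSup ({x, y} : Set Q) := (hdl z _).symm
      _ = z * y := by rw [hxy]
  have hmr : ∀ {x y : Q} (z : Q), x ≤ y → x * z ≤ y * z := by
    intro x y z h
    have hxy : sSup ({x, y} : Set Q) = y := by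
      rw [sSup_insert, sSup_singleton]; exact sup_eq_right.mpr h
    calc x * z ≤ ⨆ a ∈ ({x, y} : Set Q), a * z := le_biSup (fun a => a * z) (Set.mem_insert x {y})
      _ = sSup ({x, y} : Set Q) * z := (hdr z _).symm
      _ = y * z := by rw [hxy]
  -- SSI is closed under sSup
  have ssi_sSup : ∀ (T : Set Q),
      (∀ q ∈ T, ∀ b : Q, q * b ≤ q * b * q ∧ b * q ≤ q * b * q) →
      ∀ b : Q, sSup T * b ≤ sSup T * b * sSup T ∧ b * sSup T ≤ sSup T * b * sSup T := by
    intro T hT b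
    constructor
    · conv_lhs => rw [hdr b T]
      apply iSup₂_le
      intro q hq
      calc q * b ≤ q * b * q := (hT q hq b).1
        _ ≤ sSup T * b * sSup T :=
          le_trans (hmr q (hmr b (le_sSup hq))) (hml _ (le_sSup hq))
    · conv_lhs => rw [hdl b T]
      apply iSup₂_le
      intro q hq
      calc b * q ≤ q * b * q := (hT q hq b).2
        _ ≤ sSup T * b * sSup T :=
          le_trans (hmr q (hmr b (le_sSup hq))) (hml _ (le_sSup hq))
  -- SSI is closed under products
  have ssi_mul : ∀ p r : Q,
      (∀ b : Q, p * b ≤ p * b * p ∧ b * p ≤ p * b * p) →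
      (∀ b : Q, r * b ≤ r * b * r ∧ b * r ≤ r * b * r) →
      ∀ b : Q, p * r * b ≤ p * r * b * (p * r) ∧ b * (p * r) ≤ p * r * b * (p * r) := by
    intro p r hp hr b
    constructor
    · calc p * r * b = p * (r * b) := by rw [mul_assoc]
        _ ≤ p * (r * b) * p := (hp (r * b)).1
        _ = p * (r * (b * p)) := by simp only [mul_assoc]
        _ ≤ p * (r * (b * p) * r) := hml p (hr (b * p)).1
        _ = p * r * b * (p * r) := by simp only [mul_assoc]
    · calc b * (p * r) = b * p * r := by rw [mul_assoc]
        _ ≤ r * (b * p) * r := (hr (b * p)).2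
        _ = r * b * p * r := by simp only [mul_assoc]
        _ ≤ p * (r * b) * p * r := hmr r (hp (r * b)).2
        _ = p * r * b * (p * r) := by simp only [mul_assoc]
  set F : Q → Set Q :=
    fun a => {q ∈ S | q ≤ a ∧ ∀ b : Q, q * b ≤ q * b * q ∧ b * q ≤ q * b * q} with hF
  have hFS : ∀ a : Q, F a ⊆ S := fun a q hq => hq.1
  have hcontr : ∀ a : Q, sSup (F a) ≤ a := fun a => sSup_le fun q hq => hq.2.1
  have hssi : ∀ a : Q, ∀ b : Q,
      sSup (F a) * b ≤ sSup (F a) * b * sSup (F a) ∧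
      b * sSup (F a) ≤ sSup (F a) * b * sSup (F a) :=
    fun a => ssi_sSup (F a) (fun q hq => hq.2.2)
  have hmem : ∀ a : Q, sSup (F a) ∈ F (sSup (F a)) :=
    fun a => ⟨hSsup _ (hFS a), le_refl _, hssi a⟩
  have hmono : ∀ a b : Q, a ≤ b → sSup (F a) ≤ sSup (F b) := by
    intro a b h
    exact sSup_le_sSup fun q hq => ⟨hq.1, le_trans hq.2.1 h, hq.2.2⟩
  refine ⟨⟨hcontr, ?_, hmono, ?_⟩, fun a b => hssi a b⟩
  · intro a
    exact le_antisymm (hcontr _) (le_sSup (hmem a))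
  · intro a b
    refine le_antisymm (le_sSup ?_) (hcontr _)
    exact ⟨hSmul _ (hSsup _ (hFS a)) _ (hSsup _ (hFS b)), le_refl _,
      ssi_mul _ _ (hssi a) (hssi b)⟩
end
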